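/- Let Γ be a group, n ≥ 1, and let d_{n-1} ∈ M_{k_n×k_{n-1}}(ℝΓ), d_n ∈ M_{k_{n+1}×k_n}(ℝΓ) satisfy d_n d_{n-1} = 0. Assume the right-exactness condition in degree n: every x ∈ M_{k_n×k_n}(ℝΓ) with x d_{n-1} = 0 is of the form x = y d_n for some y ∈ M_{k_n×k_{n+1}}(ℝΓ). Then D_n(Σ²M_{k_{n+1}}(ℝΓ)) = im D_n ∩ Σ²M_{k_n}(ℝΓ) = ker D_{n-1} ∩ Σ²M_{k_n}(ℝΓ); that is, an element of Σ²M_{k_n}(ℝΓ) satisfies d_{n-1}* a d_{n-1} = 0 if and only if it equals d_n* b d_n for some b ∈ Σ²M_{k_{n+1}}(ℝΓ), if and only if it equals d_n* b d_n for some b ∈ M_{k_{n+1}}(ℝΓ). -/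

import Mathlib

open scoped BigOperators
noncomputable section

universe u v w

/-- The star operation on the real group algebra, determined by `γ ↦ γ⁻¹`. -/
def rgStar {G : Type u} [Group G] (x : MonoidAlgebra ℝ G) : MonoidAlgebra ℝ G :=
  MonoidAlgebra.ofCoeff (Finsupp.mapDomain (fun g : G => g⁻¹) x.coeff)

/-- The adjoint of a matrix over the real group algebra:
transpose and apply `rgStar` entrywise. -/
def adjM {G : Type u} [Group G] {m n : Type*}
    (a : Matrix m n (MonoidAlgebra ℝ G)) : Matrix n m (MonoidAlgebra ℝ G) :=
  Matrix.of fun i j => rgStar (a j i)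

/-- A square matrix over the real group algebra is a sum of hermitian squares. -/
def IsSOS {G : Type u} [Group G] {p : Type*} [Fintype p]
    (x : Matrix p p (MonoidAlgebra ℝ G)) : Prop :=
  ∃ (m : ℕ) (a : Fin m → Matrix p p (MonoidAlgebra ℝ G)),
    x = ∑ i, adjM (a i) * a i

/-- A unitary representation of `G` on a real Hilbert space. -/
structure URep (G : Type u) [Group G] : Type (max u (v + 1)) where
  H : Type v
  [normed : NormedAddCommGroup H]
  [ips : InnerProductSpace ℝ H]
  [complete : CompleteSpace H]
  π : G →* (H →L[ℝ] H)
  isometric : ∀ (γ : G) (x : H), ‖π γ x‖ = ‖x‖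

attribute [instance] URep.normed URep.ips URep.complete

/-- The extension of a unitary representation to the real group algebra. -/
noncomputable def URep.alg {G : Type u} [Group G] (ρ : URep.{u, v} G) :
    MonoidAlgebra ℝ G →ₐ[ℝ] (ρ.H →L[ℝ] ρ.H) :=
  MonoidAlgebra.lift ℝ (ρ.H →L[ℝ] ρ.H) G ρ.π

/-- The entrywise application of a unitary representation to a matrix over the
real group algebra, acting on tuples of vectors. -/
noncomputable def URep.mat {G : Type u} [Group G] (ρ : URep.{u, v} G)
    {p q : Type*} [Fintype q] (a : Matrix p q (MonoidAlgebra ℝ G))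
    (z : q → ρ.H) : p → ρ.H :=
  fun i => ∑ j, ρ.alg (a i j) (z j)

/-- The inner product on a finite power of a real Hilbert space. -/
noncomputable def pInner {G : Type u} [Group G] (ρ : URep.{u, v} G)
    {p : Type*} [Fintype p] (x y : p → ρ.H) : ℝ :=
  ∑ i, inner ℝ (x i) (y i)

/-!
The coefficient at `1` of the trace is a faithful positive functional on matrices over `ℝΓ`:
it sends `c* c` to the sum of the squares of all coefficients of all entries of `c`. Hence
`d_{n-1}* (∑ cᵢ* cᵢ) d_{n-1} = ∑ (cᵢ d_{n-1})* (cᵢ d_{n-1})` vanishes only if every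
`cᵢ d_{n-1} = 0`; exactness then gives `cᵢ = yᵢ d_n`, so `∑ cᵢ* cᵢ = d_n* (∑ yᵢ* yᵢ) d_n`.
Conversely `d_n d_{n-1} = 0` makes `D_{n-1}` vanish on the image of `D_n`.
-/

open Matrix

section Star

variable {G : Type u} [Group G]

lemma rgStar_zero : rgStar (0 : MonoidAlgebra ℝ G) = 0 :=
  MonoidAlgebra.mapDomain_zero _

lemma rgStar_add (x y : MonoidAlgebra ℝ G) : rgStar (x + y) = rgStar x + rgStar y :=
  MonoidAlgebra.mapDomain_add _ x y

lemma rgStar_single (g : G) (r : ℝ) :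
    rgStar (MonoidAlgebra.single g r) = MonoidAlgebra.single g⁻¹ r :=
  MonoidAlgebra.mapDomain_single

def rgStarAddHom : MonoidAlgebra ℝ G →+ MonoidAlgebra ℝ G where
  toFun := rgStar
  map_zero' := rgStar_zero
  map_add' := rgStar_add

lemma rgStar_sum {ι : Type*} (s : Finset ι) (f : ι → MonoidAlgebra ℝ G) :
    rgStar (∑ i ∈ s, f i) = ∑ i ∈ s, rgStar (f i) :=
  map_sum rgStarAddHom f s

lemma rgStar_mul (x y : MonoidAlgebra ℝ G) : rgStar (x * y) = rgStar y * rgStar x := by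
  induction x using MonoidAlgebra.induction_linear with
  | zero => simp [rgStar_zero]
  | add x x' hx hx' => rw [add_mul, rgStar_add, rgStar_add, hx, hx', mul_add]
  | single g r =>
    induction y using MonoidAlgebra.induction_linear with
    | zero => simp [rgStar_zero]
    | add y y' hy hy' => rw [mul_add, rgStar_add, rgStar_add, hy, hy', add_mul]
    | single h s =>
      rw [MonoidAlgebra.single_mul_single, rgStar_single, rgStar_single, rgStar_single,
        MonoidAlgebra.single_mul_single, _root_.mul_inv_rev, mul_comm s r]

lemma adjM_zero {m n : Type*} : adjM (0 : Matrix m n (MonoidAlgebra ℝ G)) = 0 := by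
  ext i j
  simp [adjM, rgStar_zero]

lemma adjM_mul {m n p : Type*} [Fintype n]
    (x : Matrix m n (MonoidAlgebra ℝ G)) (y : Matrix n p (MonoidAlgebra ℝ G)) :
    adjM (x * y) = adjM y * adjM x := by
  ext i j
  simp only [adjM, of_apply, mul_apply, rgStar_sum, rgStar_mul]

end Star

section Positivity

variable {G : Type u} [Group G]

lemma coeff_one_rgStar_mul (u v : MonoidAlgebra ℝ G) :
    (rgStar u * v).coeff 1 = ∑ g ∈ u.coeff.support, u.coeff g * v.coeff g := by
  have hsum : rgStar u * v = u.coeff.sum fun g r => MonoidAlgebra.single g⁻¹ r * v := by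
    rw [rgStar, Finsupp.mapDomain, MonoidAlgebra.ofCoeff_finsuppSum, Finsupp.sum_mul]
    rfl
  rw [hsum, Finsupp.sum, MonoidAlgebra.coeff_sum, Finsupp.finsetSum_apply]
  simp

lemma coeff_one_rgStar_mul_self_nonneg (u : MonoidAlgebra ℝ G) :
    0 ≤ (rgStar u * u).coeff 1 := by
  rw [coeff_one_rgStar_mul]
  exact Finset.sum_nonneg fun g _ => mul_self_nonneg _

lemma coeff_one_rgStar_mul_self_eq_zero_iff (u : MonoidAlgebra ℝ G) :
    (rgStar u * u).coeff 1 = 0 ↔ u = 0 := by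
  refine ⟨fun h => ?_, fun h => by simp [h, rgStar_zero]⟩
  rw [coeff_one_rgStar_mul, Finset.sum_eq_zero_iff_of_nonneg fun g _ => mul_self_nonneg _] at h
  ext g
  by_cases hg : g ∈ u.coeff.support
  · simpa using h g hg
  · simpa using hg

variable {p q : Type*} [Fintype p] [Fintype q]

lemma coeff_one_trace_adjM_mul_self (w : Matrix p q (MonoidAlgebra ℝ G)) :
    (adjM w * w).trace.coeff 1 = ∑ c, ∑ j, (rgStar (w j c) * w j c).coeff 1 := by
  simp only [trace, diag, mul_apply, adjM, of_apply, MonoidAlgebra.coeff_sum,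
    Finset.sum_apply']

lemma coeff_one_trace_adjM_mul_self_nonneg (w : Matrix p q (MonoidAlgebra ℝ G)) :
    0 ≤ (adjM w * w).trace.coeff 1 := by
  rw [coeff_one_trace_adjM_mul_self]
  exact Finset.sum_nonneg fun c _ => Finset.sum_nonneg fun j _ =>
    coeff_one_rgStar_mul_self_nonneg _

lemma coeff_one_trace_adjM_mul_self_eq_zero_iff (w : Matrix p q (MonoidAlgebra ℝ G)) :
    (adjM w * w).trace.coeff 1 = 0 ↔ w = 0 := by
  refine ⟨fun h => ?_, fun h => by simp [h, adjM_zero]⟩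
  have hnonneg := fun c j => coeff_one_rgStar_mul_self_nonneg (w j c)
  rw [coeff_one_trace_adjM_mul_self, Finset.sum_eq_zero_iff_of_nonneg fun c _ =>
    Finset.sum_nonneg fun j _ => hnonneg c j] at h
  refine Matrix.ext fun j c => ?_
  have hc := h c (Finset.mem_univ c)
  rw [Finset.sum_eq_zero_iff_of_nonneg fun j _ => hnonneg c j] at hc
  exact (coeff_one_rgStar_mul_self_eq_zero_iff _).mp (hc j (Finset.mem_univ j))

theorem eq_zero_of_sum_adjM_mul_self_eq_zero {ι : Type*} [Fintype ι]
    (w : ι → Matrix p q (MonoidAlgebra ℝ G)) (h : ∑ i, adjM (w i) * w i = 0) (i : ι) :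
    w i = 0 := by
  have htrace : ∑ i, (adjM (w i) * w i).trace.coeff 1 = 0 := by
    simpa [trace_sum, MonoidAlgebra.coeff_sum] using congr_arg (fun x => x.trace.coeff 1) h
  rw [Finset.sum_eq_zero_iff_of_nonneg fun i _ => coeff_one_trace_adjM_mul_self_nonneg _]
    at htrace
  exact (coeff_one_trace_adjM_mul_self_eq_zero_iff _).mp (htrace i (Finset.mem_univ i))

end Positivity

section SumsOfSquares

variable {G : Type u} [Group G] {p q : Type*} [Fintype p] [Fintype q]

lemma isSOS_zero : IsSOS (0 : Matrix p p (MonoidAlgebra ℝ G)) :=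
  ⟨0, Fin.elim0, by simp⟩

lemma isSOS_add {x y : Matrix p p (MonoidAlgebra ℝ G)} (hx : IsSOS x) (hy : IsSOS y) :
    IsSOS (x + y) := by
  obtain ⟨m₁, a₁, rfl⟩ := hx
  obtain ⟨m₂, a₂, rfl⟩ := hy
  refine ⟨m₁ + m₂, Fin.append a₁ a₂, ?_⟩
  simp [Fin.sum_univ_add]

lemma isSOS_sum {ι : Type*} (s : Finset ι) (f : ι → Matrix p p (MonoidAlgebra ℝ G))
    (hf : ∀ i ∈ s, IsSOS (f i)) : IsSOS (∑ i ∈ s, f i) :=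
  Finset.sum_induction f IsSOS (fun _ _ => isSOS_add) isSOS_zero hf

lemma isSOS_adjM_mul_self [DecidableEq q] (y : Matrix p q (MonoidAlgebra ℝ G)) :
    IsSOS (adjM y * y) := by
  rcases isEmpty_or_nonempty q with hq | ⟨⟨j₀⟩⟩
  · exact Subsingleton.elim 0 (adjM y * y) ▸ isSOS_zero
  -- write `y* y` as the sum over the rows `r` of `y` of `E* E`, where `E` has `r` as its only row
  let E : p → Matrix q q (MonoidAlgebra ℝ G) := fun r => of fun j c => if j = j₀ then y r c else 0
  have hE : adjM y * y = ∑ r, adjM (E r) * E r := by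
    ext c c'
    simp only [E, mul_apply, Matrix.sum_apply, adjM, of_apply, apply_ite rgStar, rgStar_zero,
      ite_mul, mul_ite, zero_mul, mul_zero]
    rw [Finset.sum_comm]
    simp [Finset.sum_ite_eq']
  exact hE ▸ isSOS_sum _ _ fun r _ => ⟨1, fun _ => E r, by simp⟩

end SumsOfSquares

section Exactness

variable {G : Type u} [Group G] {p q r : Type*} [Fintype p] [Fintype r]

lemma adjM_mul_sum_adjM_mul_self_mul {ι s : Type*} [Fintype ι] [Fintype s]
    (d : Matrix p q (MonoidAlgebra ℝ G)) (c : ι → Matrix s p (MonoidAlgebra ℝ G)) :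
    adjM d * (∑ i, adjM (c i) * c i) * d = ∑ i, adjM (c i * d) * (c i * d) := by
  simp only [Matrix.mul_sum, Matrix.sum_mul, adjM_mul, Matrix.mul_assoc]

lemma adjM_mul_adjM_mul_mul_mul_eq_zero {d' : Matrix p q (MonoidAlgebra ℝ G)}
    {d : Matrix r p (MonoidAlgebra ℝ G)} (hdd : d * d' = 0) (b : Matrix r r (MonoidAlgebra ℝ G)) :
    adjM d' * (adjM d * b * d) * d' = 0 := by
  calc adjM d' * (adjM d * b * d) * d' = adjM (d * d') * (b * (d * d')) := by
        simp only [adjM_mul, Matrix.mul_assoc]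
    _ = 0 := by rw [hdd, Matrix.mul_zero, Matrix.mul_zero]

theorem exists_isSOS_eq_adjM_mul_mul_of_adjM_mul_mul_eq_zero [Fintype q] [DecidableEq r]
    {d' : Matrix p q (MonoidAlgebra ℝ G)} {d : Matrix r p (MonoidAlgebra ℝ G)}
    (hexact : ∀ x : Matrix p p (MonoidAlgebra ℝ G), x * d' = 0 →
      ∃ y : Matrix p r (MonoidAlgebra ℝ G), x = y * d)
    {a : Matrix p p (MonoidAlgebra ℝ G)} (ha : IsSOS a) (hker : adjM d' * a * d' = 0) :
    ∃ b : Matrix r r (MonoidAlgebra ℝ G), IsSOS b ∧ a = adjM d * b * d := by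
  obtain ⟨m, c, rfl⟩ := ha
  rw [adjM_mul_sum_adjM_mul_self_mul] at hker
  choose y hy using fun i => hexact (c i) (eq_zero_of_sum_adjM_mul_self_eq_zero _ hker i)
  refine ⟨∑ i, adjM (y i) * y i, isSOS_sum _ _ fun i _ => isSOS_adjM_mul_self (y i), ?_⟩
  rw [adjM_mul_sum_adjM_mul_self_mul]
  exact Finset.sum_congr rfl fun i _ => by rw [hy i]

end Exactness

theorem stmt_4_general {G : Type u} [Group G]
    (kprev kn knext : ℕ)
    (dnm1 : Matrix (Fin kn) (Fin kprev) (MonoidAlgebra ℝ G))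
    (dn : Matrix (Fin knext) (Fin kn) (MonoidAlgebra ℝ G))
    (hdd : dn * dnm1 = 0)
    (hexR : ∀ x : Matrix (Fin kn) (Fin kn) (MonoidAlgebra ℝ G),
      x * dnm1 = 0 →
      ∃ y : Matrix (Fin kn) (Fin knext) (MonoidAlgebra ℝ G), x = y * dn) :
    ∀ a : Matrix (Fin kn) (Fin kn) (MonoidAlgebra ℝ G), IsSOS a →
      ((adjM dnm1 * a * dnm1 = 0 ↔
        ∃ b : Matrix (Fin knext) (Fin knext) (MonoidAlgebra ℝ G),
          IsSOS b ∧ a = adjM dn * b * dn) ∧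
       (adjM dnm1 * a * dnm1 = 0 ↔
        ∃ b : Matrix (Fin knext) (Fin knext) (MonoidAlgebra ℝ G),
          a = adjM dn * b * dn)) := by
  intro a ha
  have hker_of_im : ∀ b : Matrix (Fin knext) (Fin knext) (MonoidAlgebra ℝ G),
      a = adjM dn * b * dn → adjM dnm1 * a * dnm1 = 0 := fun b hb =>
    hb ▸ adjM_mul_adjM_mul_mul_mul_eq_zero hdd b
  have him_of_ker := exists_isSOS_eq_adjM_mul_mul_of_adjM_mul_mul_eq_zero hexR ha
  exact ⟨⟨him_of_ker, fun ⟨b, _, hb⟩ => hker_of_im b hb⟩,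
    ⟨fun h => (him_of_ker h).imp fun _ => And.right, fun ⟨b, hb⟩ => hker_of_im b hb⟩⟩

/-- sums of hermitian squares in `ker D_{n-1}` are exactly the
images under `D_n` of sums of hermitian squares: for `a ∈ Σ²M_{k_n}(ℝΓ)`,
`d_{n-1}* a d_{n-1} = 0` iff `a = d_n* b d_n` with `b ∈ Σ²M_{k_{n+1}}(ℝΓ)`,
iff `a = d_n* b d_n` for some matrix `b`. -/
theorem stmt_4 {G : Type u} [Group G] (n : ℕ) (hn : 1 ≤ n)
    (kprev kn knext : ℕ)
    (dnm1 : Matrix (Fin kn) (Fin kprev) (MonoidAlgebra ℝ G))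
    (dn : Matrix (Fin knext) (Fin kn) (MonoidAlgebra ℝ G))
    (hdd : dn * dnm1 = 0)
    (hexR : ∀ x : Matrix (Fin kn) (Fin kn) (MonoidAlgebra ℝ G),
      x * dnm1 = 0 →
      ∃ y : Matrix (Fin kn) (Fin knext) (MonoidAlgebra ℝ G), x = y * dn) :
    ∀ a : Matrix (Fin kn) (Fin kn) (MonoidAlgebra ℝ G), IsSOS a →
      ((adjM dnm1 * a * dnm1 = 0 ↔
        ∃ b : Matrix (Fin knext) (Fin knext) (MonoidAlgebra ℝ G),
          IsSOS b ∧ a = adjM dn * b * dn) ∧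
       (adjM dnm1 * a * dnm1 = 0 ↔
        ∃ b : Matrix (Fin knext) (Fin knext) (MonoidAlgebra ℝ G),
          a = adjM dn * b * dn)) :=
  stmt_4_general kprev kn knext dnm1 dn hdd hexR
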